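/- arXiv:2503.14865 — 6 statements merged into one kernel-verified Lean document; each statement's English description precedes it below -/
import Mathlib

section
/- Let f, g : G → H be digraph maps (vertex maps such that each edge (x,y) of G satisfies f(x)=f(y) or (f(x),f(y)) is an edge of H). If the mapping tube MT(f,g) is formed from (G □ I₃) ⊔ H by identifying (x,0) with f(x) and (x,3) with g(x), where I₃ is the line digraph 0 ← 1 → 2 → 3, then the compositions i∘f and i∘g of f and g with the natural embedding i : H → MT(f,g) are homotopic. -/
/-- A directed graph: a vertex type with a loopless edge relation. -/
structure DGraph where
  V : Type
  E : V → V → Prop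
  loopless : ∀ v, ¬ E v v

/-- A digraph map: each edge is collapsed or preserved. -/
structure DMap (G H : DGraph) where
  toFun : G.V → H.V
  map_edge : ∀ {x y}, G.E x y → toFun x = toFun y ∨ H.E (toFun x) (toFun y)

def DMap.id (G : DGraph) : DMap G G := ⟨fun x => x, fun e => Or.inr e⟩

def DMap.comp {G H K : DGraph} (g : DMap H K) (f : DMap G H) : DMap G K :=
  ⟨fun x => g.toFun (f.toFun x), fun e => by
    rcases f.map_edge e with h | h
    · exact Or.inl (congrArg g.toFun h)
    · exact g.map_edge h⟩

/-- The `n`-step line digraph with orientations given by `o`: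
if `o i` then the edge between `i` and `i+1` goes `i → i+1`, else `i+1 → i`. -/
def lineD (n : ℕ) (o : ℕ → Bool) : DGraph where
  V := Fin (n+1)
  E i j := ((j:ℕ) = (i:ℕ)+1 ∧ o (i:ℕ) = true) ∨ ((i:ℕ) = (j:ℕ)+1 ∧ o (j:ℕ) = false)
  loopless := by rintro v (⟨h,_⟩|⟨h,_⟩) <;> omega

/-- The box product of digraphs. -/
def boxProd (G H : DGraph) : DGraph where
  V := G.V × H.V
  E p q := (p.1 = q.1 ∧ H.E p.2 q.2) ∨ (G.E p.1 q.1 ∧ p.2 = q.2)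
  loopless := by
    rintro ⟨a,b⟩ (⟨_,h⟩|⟨h,_⟩)
    · exact H.loopless _ h
    · exact G.loopless _ h

/-- Homotopy of digraph maps via a line-digraph parametrized family. -/
def Homotopic {G H : DGraph} (f g : DMap G H) : Prop :=
  ∃ (n : ℕ) (o : ℕ → Bool) (F : DMap (boxProd G (lineD n o)) H),
    (∀ x, F.toFun (x, (0 : Fin (n+1))) = f.toFun x) ∧
    (∀ x, F.toFun (x, Fin.last n) = g.toFun x)

def DMap.const (G H : DGraph) (c : H.V) : DMap G H := ⟨fun _ => c, fun _ => Or.inl rfl⟩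

/-- A digraph is contractible if its identity is homotopic to a constant map. -/
def Contractible (G : DGraph) : Prop :=
  ∃ c : G.V, Homotopic (DMap.id G) (DMap.const G G c)

/-- Homotopy equivalence of digraphs. -/
def HomotopyEquivalence {G H : DGraph} (u : DMap G H) (v : DMap H G) : Prop :=
  Homotopic (v.comp u) (DMap.id G) ∧ Homotopic (u.comp v) (DMap.id H)

/-- Model of the mapping tube `MT(f,g)`: the quotient of `(G □ I₃) ⊔ H` by
`(x,0) ∼ f(x)`, `(x,3) ∼ g(x)` (slices 1 and 2 survive as `G.V × Fin 2`). -/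
def MT {G H : DGraph} (f g : DMap G H) : DGraph where
  V := Sum (G.V × Fin 2) H.V
  E a b :=
    match a, b with
    | Sum.inl (x, i), Sum.inl (y, j) => (i = j ∧ G.E x y) ∨ (x = y ∧ i = 0 ∧ j = 1)
    | Sum.inl (x, i), Sum.inr h => (i = 0 ∧ h = f.toFun x) ∨ (i = 1 ∧ h = g.toFun x)
    | Sum.inr h, Sum.inr h' => H.E h h'
    | Sum.inr _, Sum.inl _ => False
  loopless := by
    rintro (⟨x, i⟩ | h) hh
    · rcases hh with ⟨_, e⟩ | ⟨_, h0, h1⟩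
      · exact G.loopless _ e
      · exact absurd (h0.symm.trans h1) (by decide)
    · exact H.loopless _ hh

/-- The natural embedding `H ↪ MT(f,g)`. -/
def MTinclH {G H : DGraph} (f g : DMap G H) : DMap H (MT f g) :=
  ⟨Sum.inr, fun e => Or.inr e⟩

/-- The embedding `G → MT(f,g)`, `x ↦ (x,1)` (middle slice `1`). -/
def MTinclG1 {G H : DGraph} (f g : DMap G H) : DMap G (MT f g) :=
  ⟨fun x => Sum.inl (x, 0), fun e => Or.inr (Or.inl ⟨rfl, e⟩)⟩

/-- The embedding `G → MT(f,g)`, `x ↦ (x,2)` (middle slice `2`). -/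
def MTinclG2 {G H : DGraph} (f g : DMap G H) : DMap G (MT f g) :=
  ⟨fun x => Sum.inl (x, 1), fun e => Or.inr (Or.inl ⟨rfl, e⟩)⟩

/-- For digraph maps `f, g : G → H`, the compositions of `f` and `g`
with the natural embedding `i : H → MT(f,g)` are homotopic. -/
theorem mappingTube_comp_homotopic {G H : DGraph} (f g : DMap G H) :
    Homotopic ((MTinclH f g).comp f) ((MTinclH f g).comp g) := by
  refine ⟨3, fun k => decide (k ≠ 0),
    ⟨fun p => if p.2.val = 0 then Sum.inr (f.toFun p.1)
      else if p.2.val = 1 then Sum.inl (p.1, 0)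
      else if p.2.val = 2 then Sum.inl (p.1, 1)
      else Sum.inr (g.toFun p.1), ?_⟩, fun x => rfl, fun x => rfl⟩
  rintro ⟨x, ⟨i, hi⟩⟩ ⟨y, ⟨j, hj⟩⟩ (⟨hxy, hij⟩ | ⟨hxy, hij⟩)
  · cases hxy
    rcases hij with ⟨h1, h2⟩ | ⟨h1, h2⟩ <;> simp only [decide_eq_true_eq, decide_eq_false_iff_not, not_not] at h2
    · subst h1
      interval_cases i <;> simp_all [MT]
    · subst h1 h2
      simp [MT]
  · obtain rfl : i = j := congrArg Fin.val hij
    interval_cases i <;> simp only [MT, Nat.reduceEqDiff, if_true, if_false, reduceIte]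
    · rcases f.map_edge hxy with h | h
      · exact Or.inl (congrArg Sum.inr h)
      · exact Or.inr h
    · exact Or.inr (Or.inl ⟨trivial, hxy⟩)
    · exact Or.inr (Or.inl ⟨trivial, hxy⟩)
    · rcases g.map_edge hxy with h | h
      · exact Or.inl (congrArg Sum.inr h)
      · exact Or.inr h
end

section
/- For any digraph map f : G → H, the modified mapping cylinder M̂_f is homotopy equivalent to H; more precisely, the natural inclusion H ↪ M̂_f is a homotopy equivalence, with homotopy inverse the projection sending (g,0) to f(g) and h to h. -/
/-- A vertex of `H` with at least two `f`-preimages. -/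
def Im2 {G H : DGraph} (f : DMap G H) (h : H.V) : Prop :=
  ∃ a b : G.V, a ≠ b ∧ f.toFun a = h ∧ f.toFun b = h

/-- Edges of the image digraph `f(G)`. -/
def imE {G H : DGraph} (f : DMap G H) (h h' : H.V) : Prop :=
  h ≠ h' ∧ ∃ x y : G.V, G.E x y ∧ f.toFun x = h ∧ f.toFun y = h'

/-- Vertices `h' ∈ V_im2(f)` admitting an image-edge `(h,h')` with `h ∉ V_im2(f)`. -/
def V1' {G H : DGraph} (f : DMap G H) (h' : H.V) : Prop :=
  Im2 f h' ∧ ∃ h : H.V, ¬ Im2 f h ∧ imE f h h'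

/-- Vertices `h ∈ V_im2(f)` admitting an image-edge `(h,h')` with `h' ∉ V_im2(f)`. -/
def V1'' {G H : DGraph} (f : DMap G H) (h : H.V) : Prop :=
  Im2 f h ∧ ∃ h' : H.V, ¬ Im2 f h' ∧ imE f h h'

/-- Model of the modified mapping cylinder `M̂_f`: vertices `Sum.inl g` are the
slice-1 copies `(g,1)` and `Sum.inr h` the vertices of `H` (the slice-0 vertices
`(g,0)` are identified with `f(g)`).  Besides the cylinder edges it has the extra
edges `Ė` and `Ë` of the modified mapping cylinder. -/
def MCylMod {G H : DGraph} (f : DMap G H) : DGraph where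
  V := Sum G.V H.V
  E a b :=
    match a, b with
    | Sum.inl x, Sum.inl y => G.E x y
    | Sum.inl x, Sum.inr h =>
        h = f.toFun x ∨ (imE f (f.toFun x) h ∧ Im2 f h ∧ ¬ Im2 f (f.toFun x))
    | Sum.inr h, Sum.inl y => imE f h (f.toFun y) ∧ Im2 f h ∧ ¬ Im2 f (f.toFun y)
    | Sum.inr h, Sum.inr h' => H.E h h'
  loopless := by
    rintro (x | h) hh
    · exact G.loopless _ hh
    · exact H.loopless _ hh

lemma imE_edge {G H : DGraph} (f : DMap G H) {h h' : H.V} (hi : imE f h h') : H.E h h' := by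
  obtain ⟨hne, x, y, he, hx, hy⟩ := hi
  rcases f.map_edge he with heq | hE
  · exact absurd (hx ▸ hy ▸ heq) hne
  · exact hx ▸ hy ▸ hE

/-- The modified mapping cylinder `M̂_f` is homotopy equivalent to `H`:
the natural inclusion `H ↪ M̂_f` is a homotopy equivalence with homotopy inverse the
projection sending `(g,1)` to `f(g)` and `h` to `h`. -/
theorem modifiedMappingCylinder_homotopyEquiv {G H : DGraph} (f : DMap G H) :
    ∃ (incl : DMap H (MCylMod f)) (proj : DMap (MCylMod f) H),
      incl.toFun = Sum.inr ∧
      (∀ x : G.V, proj.toFun (Sum.inl x) = f.toFun x) ∧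
      (∀ h : H.V, proj.toFun (Sum.inr h) = h) ∧
      HomotopyEquivalence incl proj := by
  refine ⟨⟨Sum.inr, fun e => Or.inr e⟩,
    ⟨fun v => Sum.elim f.toFun _root_.id v, ?_⟩, rfl, fun _ => rfl, fun _ => rfl, ?_, ?_⟩
  · rintro (x | h) (y | h') e
    · exact f.map_edge e
    · rcases e with rfl | ⟨hi, _, _⟩
      · exact Or.inl rfl
      · exact Or.inr (imE_edge f hi)
    · exact Or.inr (imE_edge f e.1)
    · exact Or.inr e
  · -- proj ∘ incl ≃ id H, in fact equal; constant homotopy with n = 0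
    refine ⟨0, fun _ => false, ⟨fun p => p.1, ?_⟩, fun _ => rfl, fun _ => rfl⟩
    rintro ⟨a, i⟩ ⟨b, j⟩ (⟨h1, _⟩ | ⟨h1, _⟩)
    · exact Or.inl h1
    · exact Or.inr h1
  · -- incl ∘ proj ≃ id on the cylinder: one-step homotopy
    set r : (MCylMod f).V → (MCylMod f).V :=
      fun v => Sum.inr (Sum.elim f.toFun _root_.id v) with hr
    refine ⟨1, fun _ => false, ⟨fun p => if Fin.val p.2 = 0 then r p.1 else p.1, ?_⟩,
      fun _ => rfl, fun _ => rfl⟩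
    rintro ⟨a, i⟩ ⟨b, j⟩ (⟨h1, h2 | h2⟩ | ⟨h1, h2⟩)
    · exact absurd h2.2 (by simp)
    · -- line edge: i = j+1, so i.val = 1, j.val = 0
      obtain ⟨hij, -⟩ := h2
      have hij' : Fin.val i = Fin.val j + 1 := hij
      have hlt : Fin.val i < 2 := i.isLt
      have hj0 : Fin.val j = 0 := by omega
      have hi1 : Fin.val i = 1 := by omega
      subst h1
      simp only [hi1, hj0, if_true, reduceIte]
      rcases a with x | h
      · exact Or.inr (Or.inl rfl)
      · exact Or.inl rfl
    · -- graph edge, same time coordinate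
      subst h2
      by_cases hi0 : Fin.val i = 0
      · simp only [hi0, if_true, reduceIte]
        rcases a with x | h <;> rcases b with y | h'
        · rcases f.map_edge h1 with heq | hE
          · exact Or.inl (by simp [hr, heq]; rfl)
          · exact Or.inr hE
        · rcases h1 with rfl | ⟨hi, _, _⟩
          · exact Or.inl rfl
          · exact Or.inr (imE_edge f hi)
        · exact Or.inr (imE_edge f h1.1)
        · exact Or.inr h1
      · simp only [hi0, if_false, reduceIte]
        exact Or.inr h1
end

section
/- For any digraph map f : G → H, the modified cone Ĉ_f G is contractible: the identity map of Ĉ_f G is homotopic to the constant map with value the apex vertex ∗. -/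
/-- Model of the modified cone `Ĉ_f G`, given a choice function `gh` selecting a
preimage `g_h` for each `h ∈ V₁' ∪ V₁''`.  Vertices: `inl (inl g)` is `(g,0)`,
`inl (inr ())` is the apex `∗`, and `inr h` is a vertex `h ∈ V₁' ∪ V₁''`. -/
def MConeMod {G H : DGraph} (f : DMap G H) (gh : H.V → G.V) : DGraph where
  V := Sum (Sum G.V Unit) {h : H.V // V1' f h ∨ V1'' f h}
  E a b :=
    match a, b with
    | Sum.inl (Sum.inl x), Sum.inl (Sum.inl y) => G.E x y
    | Sum.inl (Sum.inl _), Sum.inl (Sum.inr _) => True  -- ((g,0),∗)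
    | Sum.inl (Sum.inr _), Sum.inl (Sum.inl _) => True  -- (∗,(g,0)) from the cone CG
    | Sum.inl (Sum.inr _), Sum.inr h => V1' f h.val     -- (∗,h')
    | Sum.inr h, Sum.inl (Sum.inr _) => V1'' f h.val    -- (h,∗)
    | Sum.inl (Sum.inl x), Sum.inr h => x = gh h.val    -- chosen edge ((g_h,0),h)
    | _, _ => False
  loopless := by
    rintro ((x | u) | h) hh
    · exact G.loopless _ hh
    · exact hh
    · exact hh

/-- The modified cone `Ĉ_f G` is contractible: its identity map is
homotopic to the constant map with value the apex `∗`, for any choice function `gh`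
with `f(g_h) = h` on `V₁' ∪ V₁''`. -/
theorem modifiedCone_contractible {G H : DGraph} (f : DMap G H) (gh : H.V → G.V)
    (hgh : ∀ h : H.V, (V1' f h ∨ V1'' f h) → f.toFun (gh h) = h) :
    Homotopic (DMap.id (MConeMod f gh))
      (DMap.const (MConeMod f gh) (MConeMod f gh) (Sum.inl (Sum.inr ()))) := by
  classical
  let K := MConeMod f gh
  let apex : K.V := Sum.inl (Sum.inr ())
  let F1 : K.V → K.V := fun x =>
    match x with
    | Sum.inl a => Sum.inl a
    | Sum.inr h => if V1'' f h.val then Sum.inr h else apex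
  -- F1 moves each vertex one step toward the apex where needed:
  have hF1_to : ∀ x : K.V, F1 x = x ∨ K.E (F1 x) x := by
    intro x
    match x with
    | Sum.inl a => exact Or.inl rfl
    | Sum.inr h =>
      by_cases hv : V1'' f h.val
      · simp only [F1, hv, if_pos]
        exact Or.inl (if_pos trivial)
      · simp only [F1, hv, if_neg, not_false_iff]
        refine Or.inr ?_
        rcases h.property with h1' | h2'
        · exact h1'
        · exact absurd h2' hv
  have hF1_apex : ∀ x : K.V, F1 x = apex ∨ K.E (F1 x) apex := by
    intro x
    match x with
    | Sum.inl (Sum.inl g) => exact Or.inr trivial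
    | Sum.inl (Sum.inr u) => exact Or.inl rfl
    | Sum.inr h =>
      by_cases hv : V1'' f h.val
      · simp only [F1, hv, if_pos]
        exact Or.inr hv
      · simp only [F1, hv, if_neg, not_false_iff]
        exact Or.inl (if_neg not_false)
  have hF1_edge : ∀ x y : K.V, K.E x y → F1 x = F1 y ∨ K.E (F1 x) (F1 y) := by
    intro x y he
    match x, y with
    | Sum.inl a, Sum.inl b => exact Or.inr he
    | Sum.inl a, Sum.inr h =>
      by_cases hv : V1'' f h.val
      · simp only [F1, hv, if_pos]
        exact Or.inr he
      · simp only [F1, hv, if_neg, not_false_iff]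
        match a with
        | Sum.inl g => exact Or.inr trivial
        | Sum.inr u => exact Or.inl rfl
    | Sum.inr h, Sum.inl b =>
      by_cases hv : V1'' f h.val
      · simp only [F1, hv, if_pos]
        exact Or.inr he
      · match b with
        | Sum.inr u => exact absurd he hv
    | Sum.inr h, Sum.inr h' => exact absurd he id
  refine ⟨2, fun i => if i = 0 then false else true,
    ⟨fun p => if Fin.val p.2 = 0 then p.1 else if Fin.val p.2 = 1 then F1 p.1 else apex, ?_⟩,
    ?_, ?_⟩
  · rintro ⟨x, tv, htv⟩ ⟨y, sv, hsv⟩ (⟨hxy, he⟩ | ⟨he, hts⟩)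
    · -- temporal edge
      dsimp only at hxy ⊢
      subst hxy
      have he' : (sv = tv + 1 ∧ (if tv = 0 then false else true) = true) ∨
          (tv = sv + 1 ∧ (if sv = 0 then false else true) = false) := he
      rcases he' with ⟨h1, h2⟩ | ⟨h1, h2⟩
      · -- sv = tv + 1 and o tv = true, so tv = 1, sv = 2
        have ht : tv = 1 := by
          by_cases h0 : tv = 0
          · simp [h0] at h2
          · omega
        have hs : sv = 2 := by omega
        subst ht; subst hs
        norm_num
        exact hF1_apex x
      · -- tv = sv + 1 and o sv = false, so sv = 0, tv = 1
        have hs : sv = 0 := by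
          by_cases h0 : sv = 0
          · exact h0
          · simp [h0] at h2
        have ht : tv = 1 := by omega
        subst ht; subst hs
        norm_num
        exact hF1_to x
    · -- spatial edge
      dsimp only at he ⊢
      have hts' : tv = sv := congrArg Fin.val hts
      subst hts'
      by_cases h0 : tv = 0
      · simp only [h0, if_pos]
        exact Or.inr he
      · by_cases h1 : tv = 1
        · simp only [h0, h1, if_neg, if_pos, not_false_iff]
          norm_num
          exact hF1_edge x y he
        · simp only [h0, h1, if_neg, not_false_iff]
          exact Or.inl trivial
  · intro x
    rfl
  · intro x
    rfl
end

section
/- Let f : G → H be a digraph map between finite digraphs and let H̄ be a digraph Brown functor. The sequence H̄(C(f)) → H̄(H) → H̄(G), induced by f : G → H and the natural embedding i : H ↪ C(f) into the modified mapping cone, is exact at H̄(H): the image of i* equals the kernel of f*. -/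
open CategoryTheory

/-- A subdigraph of a digraph, given by subsets of vertices and edges. -/
structure Subdigraph (Y : DGraph) where
  verts : Set Y.V
  edges : Y.V → Y.V → Prop
  edge_sub : ∀ {x y}, edges x y → Y.E x y
  edge_mem : ∀ {x y}, edges x y → x ∈ verts ∧ y ∈ verts

namespace Subdigraph
variable {Y : DGraph}

def le (A B : Subdigraph Y) : Prop :=
  A.verts ⊆ B.verts ∧ ∀ {x y}, A.edges x y → B.edges x y

def union (A B : Subdigraph Y) : Subdigraph Y where
  verts := A.verts ∪ B.verts
  edges x y := A.edges x y ∨ B.edges x y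
  edge_sub := by rintro x y (h|h) <;> [exact A.edge_sub h; exact B.edge_sub h]
  edge_mem := by
    rintro x y (h|h)
    · exact ⟨Or.inl (A.edge_mem h).1, Or.inl (A.edge_mem h).2⟩
    · exact ⟨Or.inr (B.edge_mem h).1, Or.inr (B.edge_mem h).2⟩

def inter (A B : Subdigraph Y) : Subdigraph Y where
  verts := A.verts ∩ B.verts
  edges x y := A.edges x y ∧ B.edges x y
  edge_sub h := A.edge_sub h.1
  edge_mem h := ⟨⟨(A.edge_mem h.1).1, (B.edge_mem h.2).1⟩, (A.edge_mem h.1).2, (B.edge_mem h.2).2⟩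

/-- The digraph determined by a subdigraph. -/
def toD (A : Subdigraph Y) : DGraph where
  V := {v // v ∈ A.verts}
  E x y := A.edges x.val y.val
  loopless v h := Y.loopless v.val (A.edge_sub h)

def inclDMap {A B : Subdigraph Y} (h : A.le B) : DMap A.toD B.toD :=
  ⟨fun v => ⟨v.val, h.1 v.prop⟩, fun e => Or.inr (h.2 e)⟩

/-- Inclusion of a subdigraph into the ambient digraph. -/
def inclY (A : Subdigraph Y) : DMap A.toD Y :=
  ⟨fun v => v.val, fun e => Or.inr (A.edge_sub e)⟩

theorem le_union_left (A B : Subdigraph Y) : A.le (A.union B) :=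
  ⟨fun _ h => Or.inl h, fun e => Or.inl e⟩
theorem le_union_right (A B : Subdigraph Y) : B.le (A.union B) :=
  ⟨fun _ h => Or.inr h, fun e => Or.inr e⟩
theorem inter_le_left (A B : Subdigraph Y) : (A.inter B).le A :=
  ⟨fun _ h => h.1, fun e => e.1⟩
theorem inter_le_right (A B : Subdigraph Y) : (A.inter B).le B :=
  ⟨fun _ h => h.2, fun e => e.2⟩

theorem finiteV {A : Subdigraph Y} (h : A.verts.Finite) : Finite A.toD.V :=
  h.to_subtype

theorem inter_verts_finite {A B : Subdigraph Y} (hA : A.verts.Finite) :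
    (A.inter B).verts.Finite := hA.subset Set.inter_subset_left

theorem union_verts_finite {A B : Subdigraph Y} (hA : A.verts.Finite)
    (hB : B.verts.Finite) : (A.union B).verts.Finite := hA.union hB
end Subdigraph

/-- Disjoint union (coproduct) of a family of digraphs. -/
def sigmaD {ι : Type} (G : ι → DGraph) : DGraph where
  V := Σ i, (G i).V
  E a b := ∃ h : a.1 = b.1, (G b.1).E (cast (congrArg (fun i => (G i).V) h) a.2) b.2
  loopless := by rintro ⟨i, x⟩ ⟨h, e⟩; exact (G i).loopless x e

def sigmaIncl {ι : Type} (G : ι → DGraph) (i : ι) : DMap (G i) (sigmaD G) :=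
  ⟨fun x => ⟨i, x⟩, fun e => Or.inr ⟨rfl, e⟩⟩

/-- Binary disjoint union of digraphs. -/
def sumD (G H : DGraph) : DGraph where
  V := Sum G.V H.V
  E a b :=
    match a, b with
    | Sum.inl x, Sum.inl y => G.E x y
    | Sum.inr x, Sum.inr y => H.E x y
    | _, _ => False
  loopless := by
    rintro (x|x) h
    · exact G.loopless x h
    · exact H.loopless x h

/-- A digraph Brown functor: a contravariant, homotopy-invariant, abelian-group valued
functor on finite digraphs satisfying the triviality, additivity and Mayer–Vietoris axioms. -/
structure BrownFunctor where
  obj : ∀ (G : DGraph), Finite G.V → AddCommGrpCat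
  map : ∀ {G H : DGraph} (hG : Finite G.V) (hH : Finite H.V),
    DMap G H → (obj H hH ⟶ obj G hG)
  map_id : ∀ (G : DGraph) (hG : Finite G.V), map hG hG (DMap.id G) = 𝟙 (obj G hG)
  map_comp : ∀ {G H K : DGraph} (hG : Finite G.V) (hH : Finite H.V) (hK : Finite K.V)
    (f : DMap G H) (g : DMap H K), map hG hK (g.comp f) = (map hH hK g) ≫ (map hG hH f)
  map_homotopic : ∀ {G H : DGraph} (hG : Finite G.V) (hH : Finite H.V)
    (f g : DMap G H), Homotopic f g → map hG hH f = map hG hH g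
  triviality : ∀ (G : DGraph) (hG : Finite G.V), Subsingleton G.V → Nonempty G.V →
    ∀ x : obj G hG, x = 0
  additivity : ∀ {ι : Type} [Finite ι] (Gf : ι → DGraph) (h : ∀ i, Finite (Gf i).V),
    Function.Bijective (fun (x : obj (sigmaD Gf) (by have := h; exact Finite.instSigma)) i =>
      map (h i) _ (sigmaIncl Gf i) x)
  mayer_vietoris : ∀ (Y : DGraph) (A B : Subdigraph Y)
    (hA : A.verts.Finite) (hB : B.verts.Finite)
    (a : obj A.toD (Subdigraph.finiteV hA)) (b : obj B.toD (Subdigraph.finiteV hB)),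
    map (Subdigraph.finiteV (Subdigraph.inter_verts_finite hA)) _
        (Subdigraph.inclDMap (Subdigraph.inter_le_left A B)) a =
    map (Subdigraph.finiteV (Subdigraph.inter_verts_finite hA)) _
        (Subdigraph.inclDMap (Subdigraph.inter_le_right A B)) b →
    ∃ c : obj (A.union B).toD (Subdigraph.finiteV (Subdigraph.union_verts_finite hA hB)),
      map _ _ (Subdigraph.inclDMap (Subdigraph.le_union_left A B)) c = a ∧
      map _ _ (Subdigraph.inclDMap (Subdigraph.le_union_right A B)) c = b

/-- Model of the modified mapping cone `C(f)` of `f : G → H`, given a choice function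
`gh` selecting the preimage `g_h` for `h ∈ V₁' ∪ V₁''`.  Vertices: `inl (inl g)` is the
middle copy of `G`, `inl (inr h)` is `H`, `inr ()` is the apex `∗`. -/
def Cone {G H : DGraph} (f : DMap G H) (gh : H.V → G.V) : DGraph where
  V := Sum (Sum G.V H.V) Unit
  E a b :=
    match a, b with
    | Sum.inl (Sum.inl x), Sum.inl (Sum.inl y) => G.E x y
    | Sum.inl (Sum.inr h), Sum.inl (Sum.inr h') => H.E h h'
    | Sum.inl (Sum.inl x), Sum.inl (Sum.inr h) =>
        h = f.toFun x ∨ (imE f (f.toFun x) h ∧ Im2 f h ∧ ¬ Im2 f (f.toFun x))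
        ∨ ((V1' f h ∨ V1'' f h) ∧ x = gh h)
    | Sum.inl (Sum.inr h), Sum.inl (Sum.inl y) =>
        imE f h (f.toFun y) ∧ Im2 f h ∧ ¬ Im2 f (f.toFun y)
    | Sum.inl (Sum.inl _), Sum.inr _ => True          -- ((g,0),∗)
    | Sum.inr _, Sum.inl (Sum.inl _) => True          -- (∗,(g,0))
    | Sum.inr _, Sum.inl (Sum.inr h) => V1' f h       -- (∗,h')
    | Sum.inl (Sum.inr h), Sum.inr _ => V1'' f h      -- (h,∗)
    | Sum.inr _, Sum.inr _ => False
  loopless := by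
    rintro ((x | h) | u) hh
    · exact G.loopless _ hh
    · exact H.loopless _ hh
    · exact hh

/-- The natural embedding `H ↪ C(f)`. -/
def ConeInclH {G H : DGraph} (f : DMap G H) (gh : H.V → G.V) : DMap H (Cone f gh) :=
  ⟨fun h => Sum.inl (Sum.inr h), fun e => Or.inr e⟩

/-- The inclusion of the middle copy of `G` into `C(f)`. -/
def ConeInclG {G H : DGraph} (f : DMap G H) (gh : H.V → G.V) : DMap G (Cone f gh) :=
  ⟨fun x => Sum.inl (Sum.inl x), fun e => Or.inr e⟩

/-- The apex vertex `∗` of `C(f)`. -/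
def ConeApex {G H : DGraph} (f : DMap G H) (gh : H.V → G.V) : (Cone f gh).V :=
  Sum.inr ()

section ConeExactAux

theorem DMap.ext' {G H : DGraph} {u v : DMap G H} (h : u.toFun = v.toFun) : u = v := by
  cases u; cases v; cases h; rfl

/-- The singleton digraph. -/
def PtD : DGraph := ⟨Unit, fun _ _ => False, fun _ h => h⟩

def toPt (G : DGraph) : DMap G PtD := ⟨fun _ => (), fun _ => Or.inl rfl⟩

theorem map_map (B : BrownFunctor) {G H K : DGraph} (hG : Finite G.V) (hH : Finite H.V)
    (hK : Finite K.V) (f : DMap G H) (g : DMap H K) (x : B.obj K hK) :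
    B.map hG hH f (B.map hH hK g x) = B.map hG hK (g.comp f) x := by
  rw [B.map_comp hG hH hK f g]; rfl

variable {G H : DGraph} (f : DMap G H) (gh : H.V → G.V)

def apexMap : DMap PtD (Cone f gh) := ⟨fun _ => Sum.inr (), fun e => e.elim⟩

/-- The modified cone part of `C(f)`: all vertices that are in the cone
(middle copy of `G`, apex, glued `V₁' ∪ V₁''` vertices), with the apex edges. -/
def subA : Subdigraph (Cone f gh) where
  verts := {v | v = Sum.inr () ∨ (∃ x, v = Sum.inl (Sum.inl x)) ∨
    ∃ h, v = Sum.inl (Sum.inr h) ∧ (V1' f h ∨ V1'' f h)}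
  edges x y := (Cone f gh).E x y ∧ (x = Sum.inr () ∨ y = Sum.inr ())
  edge_sub h := h.1
  edge_mem := by
    rintro x y ⟨he, rfl | rfl⟩
    · refine ⟨Or.inl rfl, ?_⟩
      rcases y with (a | h) | u
      · exact Or.inr (Or.inl ⟨a, rfl⟩)
      · exact Or.inr (Or.inr ⟨h, rfl, Or.inl he⟩)
      · exact he.elim
    · refine ⟨?_, Or.inl rfl⟩
      rcases x with (a | h) | u
      · exact Or.inr (Or.inl ⟨a, rfl⟩)
      · exact Or.inr (Or.inr ⟨h, rfl, Or.inr he⟩)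
      · exact he.elim

/-- The modified mapping cylinder part of `C(f)`: everything away from the apex. -/
def subB : Subdigraph (Cone f gh) where
  verts := {v | v ≠ Sum.inr ()}
  edges x y := (Cone f gh).E x y ∧ x ≠ Sum.inr () ∧ y ≠ Sum.inr ()
  edge_sub h := h.1
  edge_mem h := ⟨h.2.1, h.2.2⟩

def rFun : (v : (Cone f gh).V) → v ≠ Sum.inr () → H.V
  | Sum.inl (Sum.inl x), _ => f.toFun x
  | Sum.inl (Sum.inr h), _ => h
  | Sum.inr _, hv => absurd rfl hv

/-- The retraction of the modified mapping cylinder onto `H`. -/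
def cylRetr (hgh : ∀ h : H.V, (V1' f h ∨ V1'' f h) → f.toFun (gh h) = h) :
    DMap (subB f gh).toD H where
  toFun v := rFun f gh v.1 v.2
  map_edge := by
    rintro ⟨v, hv⟩ ⟨w, hw⟩ ⟨he, h1, h2⟩
    rcases v with (x | h) | u
    · rcases w with (y | h) | u'
      · exact f.map_edge he
      · rcases he with rfl | ⟨⟨hne, a, b, hab, ha, hb⟩, _, _⟩ | ⟨hv1, rfl⟩
        · exact Or.inl rfl
        · rcases f.map_edge hab with heq | hE
          · exact absurd (ha.symm.trans (heq.trans hb)) hne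
          · refine Or.inr ?_
            show H.E (f.toFun x) h
            rw [← ha, ← hb]; exact hE
        · exact Or.inl (hgh h hv1)
      · exact absurd rfl h2
    · rcases w with (y | h') | u'
      · obtain ⟨⟨hne, a, b, hab, ha, hb⟩, _, _⟩ := he
        rcases f.map_edge hab with heq | hE
        · exact absurd (ha.symm.trans (heq.trans hb)) hne
        · refine Or.inr ?_
          show H.E h (f.toFun y)
          rw [← ha, ← hb]; exact hE
      · exact Or.inr he
      · exact absurd rfl h2
    · exact absurd rfl h1

def qFun : (v : (Cone f gh).V) → v ≠ Sum.inr () → G.V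
  | Sum.inl (Sum.inl x), _ => x
  | Sum.inl (Sum.inr h), _ => gh h
  | Sum.inr _, hv => absurd rfl hv

/-- The retraction of `Ĉ_f G ∩ M̂_f` onto `G`. -/
def qMap : DMap ((subA f gh).inter (subB f gh)).toD G where
  toFun v := qFun f gh v.1 v.2.2
  map_edge := by
    rintro v w ⟨⟨_, h1⟩, _, h2, h3⟩
    exact absurd h1 (not_or.mpr ⟨h2, h3⟩)

def jB : DMap H (subB f gh).toD where
  toFun h := ⟨Sum.inl (Sum.inr h), fun hc => Sum.inl_ne_inr hc⟩
  map_edge e := Or.inr ⟨e, fun hc => Sum.inl_ne_inr hc, fun hc => Sum.inl_ne_inr hc⟩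

def ψmem : ∀ v : (Cone f gh).V, v ∈ ((subA f gh).union (subB f gh)).verts
  | Sum.inl _ => Or.inr (fun hc => Sum.inl_ne_inr hc)
  | Sum.inr _ => Or.inl (Or.inl rfl)

def ψMap : DMap (Cone f gh) ((subA f gh).union (subB f gh)).toD where
  toFun v := ⟨v, ψmem f gh v⟩
  map_edge := by
    intro v w e
    refine Or.inr ?_
    rcases v with v | u
    · rcases w with w | u'
      · exact Or.inr ⟨e, fun hc => Sum.inl_ne_inr hc, fun hc => Sum.inl_ne_inr hc⟩
      · exact Or.inl ⟨e, Or.inr rfl⟩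
    · exact Or.inl ⟨e, Or.inl rfl⟩

theorem homotopic_const_inclH_comp :
    Homotopic (DMap.const G (Cone f gh) (Sum.inr ())) ((ConeInclH f gh).comp f) := by
  refine ⟨2, fun _ => true,
    ⟨fun p => if Fin.val p.2 = 0 then Sum.inr () else
      if Fin.val p.2 = 1 then Sum.inl (Sum.inl p.1) else Sum.inl (Sum.inr (f.toFun p.1)), ?_⟩,
    fun x => rfl, fun x => rfl⟩
  rintro ⟨x, k⟩ ⟨y, l⟩ (⟨rfl, hkl⟩ | ⟨hE, rfl⟩)
  · rcases hkl with ⟨hl, -⟩ | ⟨-, ho⟩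
    · have hl' : Fin.val l = Fin.val k + 1 := hl
      have hl3 : Fin.val l < 3 := Fin.is_lt l
      have hk : Fin.val k = 0 ∨ Fin.val k = 1 := by omega
      rcases hk with h0 | h1
      · right
        have hl1 : Fin.val l = 1 := by omega
        simp only [h0, hl1]
        norm_num
        exact trivial
      · right
        have hl2 : Fin.val l = 2 := by omega
        simp only [h1, hl2]
        norm_num
        exact Or.inl rfl
    · simp at ho
  · have hk : Fin.val k = 0 ∨ Fin.val k = 1 ∨ Fin.val k = 2 := by have := Fin.is_lt k; omega
    rcases hk with h | h | h
    · left; simp [h]; rfl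
    · right; simp only [h]; norm_num; exact hE
    · rcases f.map_edge hE with heq | hEH
      · left; simp [h, heq]; rfl
      · right; simp only [h]; norm_num; exact hEH

end ConeExactAux

/-- For a digraph map `f : G → H` of finite digraphs and a digraph Brown
functor `H̄`, the sequence `H̄(C(f)) → H̄(H) → H̄(G)` induced by `f` and the natural
embedding `i : H ↪ C(f)` is exact at `H̄(H)`: `ker f* = im i*`. -/
theorem brownFunctor_cone_exact (B : BrownFunctor) {G H : DGraph}
    (hG : Finite G.V) (hH : Finite H.V) (f : DMap G H)
    (gh : H.V → G.V) (hgh : ∀ h : H.V, (V1' f h ∨ V1'' f h) → f.toFun (gh h) = h)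
    (hC : Finite (Cone f gh).V) :
    ∀ y : B.obj H hH,
      B.map hG hH f y = 0 ↔ ∃ z : B.obj (Cone f gh) hC, B.map hH hC (ConeInclH f gh) z = y := by
  intro y
  have hCV : Finite (Cone f gh).V := hC
  have hA : (subA f gh).verts.Finite := Set.toFinite _
  have hB : (subB f gh).verts.Finite := Set.toFinite _
  have hBf : Finite (subB f gh).toD.V := Subdigraph.finiteV hB
  have hIf : Finite ((subA f gh).inter (subB f gh)).toD.V :=
    Subdigraph.finiteV (Subdigraph.inter_verts_finite hA)
  have hUf : Finite ((subA f gh).union (subB f gh)).toD.V :=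
    Subdigraph.finiteV (Subdigraph.union_verts_finite hA hB)
  constructor
  · intro hy
    have h1 : (cylRetr f gh hgh).comp
        (Subdigraph.inclDMap (Subdigraph.inter_le_right (subA f gh) (subB f gh))) =
        f.comp (qMap f gh) := by
      apply DMap.ext'
      funext v
      obtain ⟨val, hm⟩ := v
      rcases val with (x | h) | u
      · rfl
      · rcases hm.1 with hc | ⟨x, hc⟩ | ⟨h', hc, hv1⟩
        · simp at hc
        · exact nomatch hc
        · have : h = h' := by
            injection hc with hc'; injection hc' with hc''
          exact (this ▸ (hgh h' hv1)).symm
      · exact absurd rfl hm.2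
    have cond :
        B.map hIf hBf
          (Subdigraph.inclDMap (Subdigraph.inter_le_right (subA f gh) (subB f gh)))
          (B.map hBf hH (cylRetr f gh hgh) y) = 0 := by
      have e1 := map_map B hIf hBf hH
        (Subdigraph.inclDMap (Subdigraph.inter_le_right (subA f gh) (subB f gh)))
        (cylRetr f gh hgh) y
      have e2 := map_map B hIf hG hH (qMap f gh) f y
      rw [e1, h1, ← e2, hy, map_zero]
    obtain ⟨c, hc1, hc2⟩ := B.mayer_vietoris (Cone f gh) (subA f gh) (subB f gh) hA hB
      0 (B.map hBf hH (cylRetr f gh hgh) y) (by rw [map_zero, cond])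
    refine ⟨B.map hC hUf (ψMap f gh) c, ?_⟩
    have e3 := map_map B hH hC hUf (ConeInclH f gh) (ψMap f gh) c
    have h2 : (ψMap f gh).comp (ConeInclH f gh) =
        (Subdigraph.inclDMap (Subdigraph.le_union_right (subA f gh) (subB f gh))).comp
          (jB f gh) := DMap.ext' rfl
    have e4 := map_map B hH hBf hUf (jB f gh)
      (Subdigraph.inclDMap (Subdigraph.le_union_right (subA f gh) (subB f gh))) c
    have h3 : (cylRetr f gh hgh).comp (jB f gh) = DMap.id H := DMap.ext' rfl
    have e5 := map_map B hH hBf hH (jB f gh) (cylRetr f gh hgh) y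
    rw [e3, h2, ← e4, hc2, e5, h3, B.map_id]
    rfl
  · rintro ⟨z, rfl⟩
    have hPt : Finite PtD.V := inferInstanceAs (Finite Unit)
    have e1 := map_map B hG hH hC f (ConeInclH f gh) z
    rw [e1, ← B.map_homotopic hG hC _ _ (homotopic_const_inclH_comp f gh)]
    have hconst : DMap.const G (Cone f gh) (Sum.inr ()) =
        (apexMap f gh).comp (toPt G) := DMap.ext' rfl
    rw [hconst, ← map_map B hG hPt hC (toPt G) (apexMap f gh) z,
      B.triviality PtD hPt (inferInstanceAs (Subsingleton Unit)) ⟨()⟩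
        (B.map hPt hC (apexMap f gh) z), map_zero]
end

section
/- For any digraph G, the zeroth path cohomology functor H⁰ is represented by the digraph ℤ with vertex set the integers and no edges: there is a natural isomorphism between the functor [−, ℤ] of homotopy classes of digraph maps and H⁰(−; ℤ) on finite digraphs. -/
theorem DGraph.ne_of_E {G : DGraph} {x y : G.V} (h : G.E x y) : x ≠ y :=
  fun e => G.loopless x (e ▸ h)

/-- The type of edges of a digraph. -/
def EdgeT (G : DGraph) := {p : G.V × G.V // G.E p.1 p.2}

/-- `Ω⁰(G) = Hom(Ω₀(G),ℤ)`: the group of `ℤ`-valued functions on vertices. -/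
abbrev Omega0 (G : DGraph) := G.V → ℤ

/-- `Ω¹(G) = Hom(Ω₁(G),ℤ)`: the group of `ℤ`-valued functions on edges. -/
abbrev Omega1 (G : DGraph) := EdgeT G → ℤ

def d0fun (G : DGraph) : Omega0 G → Omega1 G := fun φ e => φ e.val.2 - φ e.val.1

/-- The coboundary `d : Ω⁰(G) → Ω¹(G)`, `(dφ)(e_{uv}) = φ(v) - φ(u)`. -/
def d0 (G : DGraph) : Omega0 G →+ Omega1 G :=
  AddMonoidHom.mk' (d0fun G) (by
    intro a b; funext e; simp [d0fun]; ring)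

open Classical in
/-- Pullback of `1`-cochains along a digraph map (collapsed edges contribute `0`,
corresponding to degenerate paths). -/
noncomputable def pb1 {G H : DGraph} (f : DMap G H) (α : Omega1 H) : Omega1 G := fun e =>
  if h : H.E (f.toFun e.val.1) (f.toFun e.val.2) then
    α ⟨(f.toFun e.val.1, f.toFun e.val.2), h⟩ else 0

/-- Pullback of `0`-cochains along a digraph map. -/
def pb0 {G H : DGraph} (f : DMap G H) (φ : Omega0 H) : Omega0 G := fun v => φ (f.toFun v)

/-- `H⁰(G) = ker(d : Ω⁰ → Ω¹)`. -/
def H0 (G : DGraph) : AddSubgroup (Omega0 G) := (d0 G).ker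

/-- The digraph `ℤ`: vertices the integers, no edges. -/
def Zdig : DGraph := ⟨ℤ, fun _ _ => False, fun _ h => h⟩

/-- The set of homotopy classes of digraph maps `G → Y`. -/
def HomClasses (G Y : DGraph) := Quot (fun f g : DMap G Y => Homotopic f g)

lemma Zdig_edge_eq {G : DGraph} (f : DMap G Zdig) {x y : G.V} (h : G.E x y) :
    f.toFun x = f.toFun y := by
  rcases f.map_edge h with h | h
  · exact h
  · exact absurd h (fun h => h)

lemma DMap.ext'_s13 {G H : DGraph} {f g : DMap G H} (h : f.toFun = g.toFun) : f = g := by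
  cases f; cases g; cases h; rfl

lemma homotopic_to_Z {G : DGraph} {f g : DMap G Zdig} (h : Homotopic f g) : f = g := by
  obtain ⟨n, o, F, h0, h1⟩ := h
  apply DMap.ext'_s13
  funext x
  have key : ∀ i : Fin (n+1), F.toFun (x, i) = F.toFun (x, (0 : Fin (n+1))) := by
    intro i
    induction i using Fin.induction with
    | zero => rfl
    | succ j ih =>
      have e : (boxProd G (lineD n o)).E (x, j.castSucc) (x, j.succ) ∨
               (boxProd G (lineD n o)).E (x, j.succ) (x, j.castSucc) := by
        by_cases ho : o (j : ℕ) = true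
        · left; left; exact ⟨rfl, Or.inl ⟨by simp, ho⟩⟩
        · right; left
          refine ⟨rfl, Or.inr ⟨by simp, ?_⟩⟩
          simpa using ho
      have : F.toFun (x, j.succ) = F.toFun (x, j.castSucc) := by
        rcases e with e | e
        · exact (Zdig_edge_eq F e).symm
        · exact Zdig_edge_eq F e
      rw [this, ih]
  have := key (Fin.last n)
  rw [h1 x, h0 x] at this
  exact this.symm

/-- The functor `H⁰(−;ℤ)` on finite digraphs is represented by the
digraph `ℤ`: there is a family of bijections `θ_G : [G,ℤ] → H⁰(G;ℤ)`, natural in `G`. -/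
theorem H0_represented_by_Z :
    ∃ θ : ∀ (G : DGraph), Finite G.V → HomClasses G Zdig → H0 G,
      (∀ (G H : DGraph) (hG : Finite G.V) (hH : Finite H.V) (f : DMap G H)
          (u : DMap H Zdig),
        ((θ G hG (Quot.mk _ (u.comp f))) : Omega0 G) =
          pb0 f ((θ H hH (Quot.mk _ u)) : Omega0 H)) ∧
      (∀ (G : DGraph) (hG : Finite G.V), Function.Bijective (θ G hG)) := by
  refine ⟨fun G _ q => Quot.lift (fun f : DMap G Zdig =>
      (⟨f.toFun, by
        show (d0 G) f.toFun = 0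
        funext e
        show d0fun G f.toFun e = 0
        unfold d0fun
        rw [Zdig_edge_eq f e.property]; exact sub_self _⟩ : H0 G))
    (fun f g h => by rw [homotopic_to_Z h]) q, fun G H hG hH f u => rfl, ?_⟩
  intro G hG
  constructor
  · intro a b
    induction a using Quot.inductionOn with | h fa =>
    induction b using Quot.inductionOn with | h fb =>
    intro h
    have : fa.toFun = fb.toFun := congrArg Subtype.val h
    rw [DMap.ext'_s13 this]
  · rintro ⟨φ, hφ⟩
    refine ⟨Quot.mk _ ⟨φ, fun {x y} e => Or.inl ?_⟩, rfl⟩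
    have h2 : d0fun G φ ⟨(x, y), e⟩ = 0 :=
      congrFun (AddMonoidHom.mem_ker.mp hφ) ⟨(x, y), e⟩
    have : φ y - φ x = 0 := h2
    exact (sub_eq_zero.mp this).symm
end

section
/- Let f : G → H be a digraph map. In the modified mapping cone C(f), the map f̃ : G → C(f) induced by f (composing f with the embedding H ↪ C(f)), the inclusion of the middle copy of G into C(f), and the constant map to the apex vertex ∗ are all pairwise homotopic. -/
/-- Helper: build a digraph map out of a box product with a line digraph. -/
def mkHomotopy {G K : DGraph} (n : ℕ) (o : ℕ → Bool) (F : G.V → Fin (n+1) → K.V)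
    (hvert : ∀ (a : G.V) (i j : Fin (n+1)),
      (((j:ℕ) = (i:ℕ)+1 ∧ o (i:ℕ) = true) ∨ ((i:ℕ) = (j:ℕ)+1 ∧ o (j:ℕ) = false)) →
      F a i = F a j ∨ K.E (F a i) (F a j))
    (hhor : ∀ (a b : G.V) (i : Fin (n+1)), G.E a b → F a i = F b i ∨ K.E (F a i) (F b i)) :
    DMap (boxProd G (lineD n o)) K :=
  ⟨fun p => F p.1 p.2, by
    rintro ⟨a, i⟩ ⟨b, j⟩ (⟨hab, hij⟩ | ⟨hab, hij⟩)
    · cases hab; exact hvert a i j hij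
    · cases hij; exact hhor a b i hab⟩

/-- In the modified mapping cone `C(f)`, the map `f̃ : G → C(f)` induced
by `f`, the inclusion of the middle copy of `G`, and the constant map to the apex `∗` are
pairwise homotopic. -/
theorem cone_maps_pairwise_homotopic {G H : DGraph} (f : DMap G H) (gh : H.V → G.V)
    (hgh : ∀ h : H.V, (V1' f h ∨ V1'' f h) → f.toFun (gh h) = h) :
    Homotopic ((ConeInclH f gh).comp f) (ConeInclG f gh) ∧
    Homotopic (ConeInclG f gh) (DMap.const G (Cone f gh) (ConeApex f gh)) ∧
    Homotopic ((ConeInclH f gh).comp f) (DMap.const G (Cone f gh) (ConeApex f gh)) := by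
  refine ⟨?_, ?_, ?_⟩
  · refine ⟨1, fun _ => false, mkHomotopy 1 (fun _ => false)
      (fun a i => if (i : ℕ) = 0 then Sum.inl (Sum.inr (f.toFun a)) else Sum.inl (Sum.inl a))
      ?_ ?_, fun x => rfl, fun x => rfl⟩
    · rintro a i j (⟨-, ho⟩ | ⟨hij, -⟩)
      · simp at ho
      · have hi : (i : ℕ) = 1 := by omega
        have hj : (j : ℕ) = 0 := by omega
        beta_reduce
        erw [hi, hj, if_neg one_ne_zero, if_pos rfl]
        exact Or.inr (Or.inl rfl)
    · intro a b i hab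
      by_cases hi : (i : ℕ) = 0
      · beta_reduce
        erw [if_pos hi, if_pos hi]
        rcases f.map_edge hab with h | h
        · exact Or.inl (by rw [h])
        · exact Or.inr h
      · beta_reduce
        erw [if_neg hi, if_neg hi]
        exact Or.inr hab
  · refine ⟨1, fun _ => true, mkHomotopy 1 (fun _ => true)
      (fun a i => if (i : ℕ) = 0 then Sum.inl (Sum.inl a) else Sum.inr ())
      ?_ ?_, fun x => rfl, fun x => rfl⟩
    · rintro a i j (⟨hij, -⟩ | ⟨-, ho⟩)
      · have hi : (i : ℕ) = 0 := by omega
        have hj : (j : ℕ) = 1 := by omega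
        beta_reduce
        erw [hi, hj, if_pos rfl, if_neg one_ne_zero]
        exact Or.inr trivial
      · simp at ho
    · intro a b i hab
      by_cases hi : (i : ℕ) = 0
      · beta_reduce
        erw [if_pos hi, if_pos hi]
        exact Or.inr hab
      · beta_reduce
        erw [if_neg hi, if_neg hi]
        exact Or.inl rfl
  · refine ⟨2, fun k => k != 0, mkHomotopy 2 (fun k => k != 0)
      (fun a i => if (i : ℕ) = 0 then Sum.inl (Sum.inr (f.toFun a))
        else if (i : ℕ) = 1 then Sum.inl (Sum.inl a) else Sum.inr ())
      ?_ ?_, fun x => rfl, fun x => rfl⟩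
    · rintro a i j (⟨hij, ho⟩ | ⟨hij, ho⟩)
      · have hi0 : (i : ℕ) ≠ 0 := by intro h; rw [h] at ho; simp at ho
        have hi : (i : ℕ) = 1 := by omega
        have hj : (j : ℕ) = 2 := by omega
        beta_reduce
        erw [hi, hj, if_neg one_ne_zero, if_pos rfl, if_neg (by norm_num), if_neg (by norm_num)]
        exact Or.inr trivial
      · have hj : (j : ℕ) = 0 := by by_contra h; simp [h] at ho
        have hi : (i : ℕ) = 1 := by omega
        beta_reduce
        erw [hi, hj, if_neg one_ne_zero, if_pos rfl, if_pos rfl]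
        exact Or.inr (Or.inl rfl)
    · intro a b i hab
      by_cases hi0 : (i : ℕ) = 0
      · beta_reduce
        erw [if_pos hi0, if_pos hi0]
        rcases f.map_edge hab with h | h
        · exact Or.inl (by rw [h])
        · exact Or.inr h
      · by_cases hi1 : (i : ℕ) = 1
        · beta_reduce
          erw [if_neg hi0, if_neg hi0, if_pos hi1, if_pos hi1]
          exact Or.inr hab
        · beta_reduce
          erw [if_neg hi0, if_neg hi0, if_neg hi1, if_neg hi1]
          exact Or.inl rfl
end
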